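/- Consider a controlled Markov process with a deterministic transition function f : S × A → S, a horizon T ≥ 1, a time t < T, and a prefix trajectory h_t of length t ending in state s_t. Let H* be the maximum of H(d_{h_t ⊕ h'}) over all feasible length-(T−t) continuations h' from s_t, assume there is a unique action a* such that some continuation with first action a* attains H*, assume some feasible continuation has first action different from a*, and let H*_2 be the maximum of H(d_{h_t ⊕ h'}) over feasible continuations whose first action is not a*. Then every Markovian policy π_M satisfies the regret-to-go lower bound R_{T−t}(π_M, h_t) ≥ (H* − H*_2) · (1 − π_M(a*|s_t, t)). -/

import Mathlib

open scoped BigOperators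

/-- A controlled Markov process over finite state space `S` and action space `A`:
a transition kernel `P` and an initial distribution `μ`. -/
structure CMP (S A : Type) [Fintype S] [Fintype A] where
  P : S → A → S → ℝ
  P_nonneg : ∀ s a s', 0 ≤ P s a s'
  P_sum_one : ∀ s a, ∑ s', P s a s' = 1
  μ : S → ℝ
  μ_nonneg : ∀ s, 0 ≤ μ s
  μ_sum_one : ∑ s, μ s = 1

/-- A history of `t` steps: states `s_0, …, s_t` and actions `a_0, …, a_{t-1}`. -/
abbrev Hist (S A : Type) (t : ℕ) : Type := (Fin (t + 1) → S) × (Fin t → A)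

/-- A continuation of `k` further steps: actions `a_0, …, a_{k-1}` together with the
states those actions lead to. -/
abbrev Contin (S A : Type) (k : ℕ) : Type := (Fin k → A) × (Fin k → S)

/-- A general (possibly non-Markovian, possibly randomized) policy: for every time `t`
and history of length `t`, a probability distribution over actions. -/
structure Policy (S A : Type) [Fintype A] where
  p : ∀ t : ℕ, Hist S A t → A → ℝ
  nonneg : ∀ t h a, 0 ≤ p t h a
  sum_one : ∀ t h, ∑ a, p t h a = 1

/-- A Markovian (randomized, time-dependent) policy: for every time `t` and current
state `s`, a probability distribution over actions. -/
structure MPolicy (S A : Type) [Fintype A] where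
  p : ℕ → S → A → ℝ
  nonneg : ∀ t s a, 0 ≤ p t s a
  sum_one : ∀ t s, ∑ a, p t s a = 1

/-- The last (current) state of a history. -/
def lastState {S A : Type} {t : ℕ} (h : Hist S A t) : S := h.1 (Fin.last t)

/-- A Markovian policy viewed as a general policy. -/
def MPolicy.toPolicy {S A : Type} [Fintype A] (m : MPolicy S A) : Policy S A where
  p := fun t h a => m.p t (lastState h) a
  nonneg := fun t h a => m.nonneg t _ a
  sum_one := fun t h => m.sum_one t _

/-- The general policy induced by a deterministic non-Markovian policy
(a function from histories to actions). -/
def detPolicy {S A : Type} [Fintype A] [DecidableEq A] (f : ∀ t : ℕ, Hist S A t → A) :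
    Policy S A where
  p := fun t h a => if a = f t h then 1 else 0
  nonneg := by intro t h a; (try dsimp only); split <;> norm_num
  sum_one := by intro t h; simp

/-- The length-`i` prefix of a history. -/
def histTake {S A : Type} {t : ℕ} (h : Hist S A t) (i : ℕ) (hi : i ≤ t) : Hist S A i :=
  (fun j => h.1 ⟨(j : ℕ), by have := j.isLt; omega⟩,
   fun j => h.2 ⟨(j : ℕ), by have := j.isLt; omega⟩)

/-- The probability that policy `π` generates the history `h` when interacting with
the CMP `M` (initial state from `μ`, actions from `π`, transitions from `P`). -/
noncomputable def histProb {S A : Type} [Fintype S] [Fintype A]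
    (M : CMP S A) (π : Policy S A) {t : ℕ} (h : Hist S A t) : ℝ :=
  M.μ (h.1 0) * ∏ i : Fin t,
    (π.p i (histTake h i (Nat.le_of_lt i.isLt)) (h.2 i) *
      M.P (h.1 i.castSucc) (h.2 i) (h.1 i.succ))

/-- The `t`-step state distribution `d_t^π(s) = Pr(s_t = s)`. -/
noncomputable def stateDist {S A : Type} [Fintype S] [Fintype A] [DecidableEq S]
    (M : CMP S A) (π : Policy S A) (t : ℕ) (s : S) : ℝ :=
  ∑ h : Hist S A t, if lastState h = s then histProb M π h else 0

/-- Shannon entropy of a distribution on a finite set (`0 log 0 = 0` since `Real.log 0 = 0`). -/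
noncomputable def entropy {S : Type} [Fintype S] (d : S → ℝ) : ℝ :=
  -∑ s, d s * Real.log (d s)

/-- The state visitation frequency of a trajectory with `n+1` states. -/
noncomputable def visitFreq {S A : Type} [Fintype S] [DecidableEq S] {n : ℕ}
    (h : Hist S A n) (s : S) : ℝ :=
  (∑ i : Fin (n + 1), if h.1 i = s then (1 : ℝ) else 0) / ((n : ℝ) + 1)

/-- The marginal state distribution `d_T^π(s) = (1/T) ∑_{t<T} d_t^π(s)`. -/
noncomputable def marginalDist {S A : Type} [Fintype S] [Fintype A] [DecidableEq S]
    (M : CMP S A) (π : Policy S A) (T : ℕ) (s : S) : ℝ :=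
  (1 / (T : ℝ)) * ∑ t ∈ Finset.range T, stateDist M π t s

/-- The `γ`-discounted state distribution `d_γ^π(s) = (1-γ) ∑_t γ^t d_t^π(s)`. -/
noncomputable def discountedDist {S A : Type} [Fintype S] [Fintype A] [DecidableEq S]
    (M : CMP S A) (π : Policy S A) (γ : ℝ) (s : S) : ℝ :=
  (1 - γ) * ∑' t : ℕ, γ ^ t * stateDist M π t s

/-- Concatenation of a length-`t` history with a `k`-step continuation. -/
def histAppend {S A : Type} {t k : ℕ} (h : Hist S A t) (c : Contin S A k) : Hist S A (t + k) :=
  (fun j => if hj : (j : ℕ) ≤ t then h.1 ⟨(j : ℕ), by omega⟩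
            else c.2 ⟨(j : ℕ) - t - 1, by have := j.isLt; omega⟩,
   fun j => if hj : (j : ℕ) < t then h.2 ⟨(j : ℕ), hj⟩
            else c.1 ⟨(j : ℕ) - t, by have := j.isLt; omega⟩)

/-- The probability that, after the prefix history `h`, running `π` (conditioned on the
full history) produces the `k`-step continuation `c`. -/
noncomputable def contProb {S A : Type} [Fintype S] [Fintype A]
    (M : CMP S A) (π : Policy S A) {t k : ℕ} (h : Hist S A t) (c : Contin S A k) : ℝ :=
  ∏ i : Fin k,
    (π.p (t + (i : ℕ))
        (histTake (histAppend h c) (t + (i : ℕ)) (by have := i.isLt; omega))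
        ((histAppend h c).2 ⟨t + (i : ℕ), by have := i.isLt; omega⟩) *
      M.P ((histAppend h c).1 ⟨t + (i : ℕ), by have := i.isLt; omega⟩)
        ((histAppend h c).2 ⟨t + (i : ℕ), by have := i.isLt; omega⟩)
        ((histAppend h c).1 ⟨t + (i : ℕ) + 1, by have := i.isLt; omega⟩))

/-- The expected entropy of the state visitation frequency of the completed trajectory,
when running `π` for `k` further steps after the prefix history `h`. -/
noncomputable def expEntFrom {S A : Type} [Fintype S] [Fintype A] [DecidableEq S]
    (M : CMP S A) (π : Policy S A) {t : ℕ} (k : ℕ) (h : Hist S A t) : ℝ :=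
  ∑ c : Contin S A k, contProb M π h c * entropy (visitFreq (histAppend h c))

/-- A history has positive probability (under some policy) iff its initial state and all
its transitions have positive probability. -/
def Reachable {S A : Type} [Fintype S] [Fintype A] (M : CMP S A) {t : ℕ}
    (h : Hist S A t) : Prop :=
  0 < M.μ (h.1 0) ∧ ∀ i : Fin t, 0 < M.P (h.1 i.castSucc) (h.2 i) (h.1 i.succ)

/-- In a CMP with deterministic transition function `f`, a continuation `c` after the
prefix `h` is feasible if each of its states is obtained from the previous state and
the chosen action via `f`. -/
def FeasibleCont {S A : Type} (f : S → A → S) {t k : ℕ}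
    (h : Hist S A t) (c : Contin S A k) : Prop :=
  ∀ i : Fin k,
    (histAppend h c).1 ⟨t + (i : ℕ) + 1, by have := i.isLt; omega⟩
      = f ((histAppend h c).1 ⟨t + (i : ℕ), by have := i.isLt; omega⟩)
          ((histAppend h c).2 ⟨t + (i : ℕ), by have := i.isLt; omega⟩)

/-!
The first action after `h_t` is drawn from `π(·|h_t)`, and summing out the later steps of the
continuation one at a time, last step first, shows that its marginal law is exactly that
distribution. In a deterministic CMP every continuation of positive probability is feasible, so
its final entropy is at most `H*`, and at most `H*_2` unless it starts with `a*`. Hence the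
expected final entropy is at most `p H* + (1 - p) H*_2` with `p = π(a*|h_t)`, which is the bound
after rearranging; for a Markovian policy `π(a*|h_t) = π_M(a*|s_t, t)`.
-/

variable {S A : Type}

theorem sum_contin_succ [Fintype S] [Fintype A] {k : ℕ} (F : Contin S A (k + 1) → ℝ) :
    ∑ c, F c = ∑ c : Contin S A k, ∑ a, ∑ s, F (Fin.snoc c.1 a, Fin.snoc c.2 s) := by
  let e : Contin S A k × (A × S) ≃ Contin S A (k + 1) :=
    { toFun := fun p => (Fin.snoc p.1.1 p.2.1, Fin.snoc p.1.2 p.2.2)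
      invFun := fun c => ((Fin.init c.1, Fin.init c.2), (c.1 (Fin.last k), c.2 (Fin.last k)))
      left_inv := fun p => by simp
      right_inv := fun c => by simp }
  rw [← e.sum_comp, Fintype.sum_prod_type]
  simp only [Fintype.sum_prod_type]
  rfl

section Snoc

variable {t k : ℕ} (h : Hist S A t) (c : Contin S A k) (a : A) (s : S)

theorem histAppend_snoc_fst (j : ℕ) (hj : j < t + k + 1) :
    (histAppend h (Fin.snoc c.1 a, Fin.snoc c.2 s)).1 ⟨j, by omega⟩
      = (histAppend h c).1 ⟨j, hj⟩ := by
  simp only [histAppend]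
  split_ifs with hjt
  · rfl
  · exact Fin.snoc_castSucc (i := ⟨j - t - 1, by omega⟩) ..

theorem histAppend_snoc_snd (j : ℕ) (hj : j < t + k) :
    (histAppend h (Fin.snoc c.1 a, Fin.snoc c.2 s)).2 ⟨j, by omega⟩
      = (histAppend h c).2 ⟨j, hj⟩ := by
  simp only [histAppend]
  split_ifs with hjt
  · rfl
  · exact Fin.snoc_castSucc (i := ⟨j - t, by omega⟩) ..

theorem histTake_histAppend_snoc (j : ℕ) (hj : j ≤ t + k) :
    histTake (histAppend h (Fin.snoc c.1 a, Fin.snoc c.2 s)) j (by omega)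
      = histTake (histAppend h c) j hj :=
  Prod.ext (funext fun i => histAppend_snoc_fst h c a s i (by omega))
    (funext fun i => histAppend_snoc_snd h c a s i (by omega))

theorem histAppend_snoc_fst_last :
    (histAppend h (Fin.snoc c.1 a, Fin.snoc c.2 s)).1 ⟨t + k + 1, by omega⟩ = s := by
  simp only [histAppend, dif_neg (show ¬ t + k + 1 ≤ t by omega)]
  convert Fin.snoc_last (α := fun _ => S) s c.2
  rw [Fin.val_last]
  omega

theorem histAppend_snoc_snd_last :
    (histAppend h (Fin.snoc c.1 a, Fin.snoc c.2 s)).2 ⟨t + k, by omega⟩ = a := by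
  simp only [histAppend, dif_neg (show ¬ t + k < t by omega)]
  convert Fin.snoc_last (α := fun _ => A) a c.1
  rw [Fin.val_last]
  omega

end Snoc

section ContProb

variable [Fintype S] [Fintype A] (M : CMP S A) (π : Policy S A) {t : ℕ} (h : Hist S A t)

theorem contProb_snoc {k : ℕ} (c : Contin S A k) (a : A) (s : S) :
    contProb M π h (Fin.snoc c.1 a, Fin.snoc c.2 s)
      = contProb M π h c *
          (π.p (t + k) (histAppend h c) a * M.P (lastState (histAppend h c)) a s) := by
  rw [contProb, contProb, Fin.prod_univ_castSucc]
  congr 1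
  · refine Finset.prod_congr rfl fun i _ => ?_
    simp only [Fin.val_castSucc]
    rw [histTake_histAppend_snoc h c a s _ (by omega), histAppend_snoc_snd h c a s _ (by omega),
      histAppend_snoc_fst h c a s _ (by omega), histAppend_snoc_fst h c a s (t + i + 1) (by omega)]
  · simp only [Fin.val_last]
    rw [histTake_histAppend_snoc h c a s _ le_rfl, histAppend_snoc_snd_last,
      histAppend_snoc_fst h c a s _ (by omega), histAppend_snoc_fst_last]
    rfl

theorem sum_contProb_snoc {k : ℕ} (c : Contin S A k) :
    ∑ a, ∑ s, contProb M π h (Fin.snoc c.1 a, Fin.snoc c.2 s) = contProb M π h c := by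
  simp only [contProb_snoc, ← Finset.mul_sum, M.P_sum_one, mul_one, π.sum_one]

theorem sum_contProb_mul_firstAction {k : ℕ} (g : A → ℝ) :
    ∑ c : Contin S A (k + 1), contProb M π h c * g (c.1 0) = ∑ a, π.p t h a * g a := by
  induction k with
  | zero =>
    have happend (x : Contin S A 0) : histAppend h x = h :=
      Prod.ext (funext fun j => dif_pos (by omega)) (funext fun j => dif_pos (by omega))
    have hprob (x : Contin S A 0) : contProb M π h x = 1 := Fin.prod_univ_zero _
    rw [sum_contin_succ]
    simp only [contProb_snoc, happend, hprob, one_mul, ← Finset.sum_mul, ← Finset.mul_sum,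
      M.P_sum_one, mul_one]
    rw [Fintype.sum_subsingleton _ (Fin.elim0, Fin.elim0)]
    rfl
  | succ k ih =>
    rw [sum_contin_succ, ← ih]
    refine Finset.sum_congr rfl fun c _ => ?_
    simp only [← Fin.castSucc_zero, Fin.snoc_castSucc, ← Finset.sum_mul, sum_contProb_snoc]

theorem contProb_nonneg {k : ℕ} (c : Contin S A k) : 0 ≤ contProb M π h c :=
  Finset.prod_nonneg fun _ _ => mul_nonneg (π.nonneg ..) (M.P_nonneg ..)

theorem FeasibleCont.of_contProb_ne_zero {f : S → A → S}
    (hf : ∀ s a s', s' ≠ f s a → M.P s a s' = 0)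
    {k : ℕ} {c : Contin S A k} (hc : contProb M π h c ≠ 0) : FeasibleCont f h c := by
  intro i
  by_contra hi
  exact hc (Finset.prod_eq_zero (Finset.mem_univ i) (by rw [hf _ _ _ hi, mul_zero]))

theorem expEntFrom_le_of_firstAction [DecidableEq S] {f : S → A → S}
    (hf : ∀ s a s', s' ≠ f s a → M.P s a s' = 0) {n : ℕ} (hn : 0 < n) {H₁ H₂ : ℝ} {a₀ : A}
    (hH₁ : ∀ c : Contin S A n, FeasibleCont f h c →
      entropy (visitFreq (histAppend h c)) ≤ H₁)
    (hH₂ : ∀ c : Contin S A n, FeasibleCont f h c → c.1 ⟨0, hn⟩ ≠ a₀ →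
      entropy (visitFreq (histAppend h c)) ≤ H₂) :
    expEntFrom M π n h ≤ π.p t h a₀ * H₁ + (1 - π.p t h a₀) * H₂ := by
  classical
  obtain ⟨k, rfl⟩ : ∃ k, n = k + 1 := ⟨n - 1, by omega⟩
  let bound : A → ℝ := fun a => if a = a₀ then H₁ else H₂
  have hbound (c : Contin S A (k + 1)) :
      contProb M π h c * entropy (visitFreq (histAppend h c))
        ≤ contProb M π h c * bound (c.1 0) := by
    by_cases hc : contProb M π h c = 0
    · simp only [hc, zero_mul, le_refl]
    have hfeas := FeasibleCont.of_contProb_ne_zero M π h hf hc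
    refine mul_le_mul_of_nonneg_left ?_ (contProb_nonneg M π h c)
    by_cases ha : c.1 0 = a₀
    · simpa only [bound, if_pos ha] using hH₁ c hfeas
    · simpa only [bound, if_neg ha] using hH₂ c hfeas ha
  calc expEntFrom M π (k + 1) h
      ≤ ∑ c : Contin S A (k + 1), contProb M π h c * bound (c.1 0) :=
        Finset.sum_le_sum fun c _ => hbound c
    _ = ∑ a, π.p t h a * bound a := sum_contProb_mul_firstAction M π h bound
    _ = π.p t h a₀ * H₁ + (1 - π.p t h a₀) * H₂ := by
      rw [← Finset.add_sum_erase _ _ (Finset.mem_univ a₀), ← π.sum_one t h,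
        ← Finset.add_sum_erase _ _ (Finset.mem_univ a₀), add_sub_cancel_left, Finset.sum_mul]
      congr 1
      · simp only [bound, if_pos rfl]
      · exact Finset.sum_congr rfl fun a ha => by
          simp only [bound, if_neg (Finset.ne_of_mem_erase ha)]

end ContProb

/-- in a CMP with deterministic transitions `f`, with `H*` the maximal
final entropy over feasible continuations of the prefix `h_t`, `a*` the unique optimal
first action, and `H*_2` the maximal final entropy over feasible continuations whose
first action is not `a*`, every Markovian policy `π_M` satisfies the regret-to-go
lower bound `R ≥ (H* − H*_2) · (1 − π_M(a*|s_t,t))`. -/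
theorem markovian_regret_lower_bound
    {S A : Type} [Fintype S] [Fintype A]
    [DecidableEq S]
    (M : CMP S A) (f : S → A → S)
    (hdet : ∀ s a s', M.P s a s' = if s' = f s a then 1 else 0)
    (T t : ℕ) (ht : t + 1 < T)
    (h : Hist S A t) (Hstar Hstar2 : ℝ)
    (hHstar : IsGreatest
      ((fun c : Contin S A (T - 1 - t) => entropy (visitFreq (histAppend h c))) ''
        {c | FeasibleCont f h c}) Hstar)
    (astar : A)
    (hHstar2 : IsGreatest
      ((fun c : Contin S A (T - 1 - t) => entropy (visitFreq (histAppend h c))) ''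
        {c | FeasibleCont f h c ∧ c.1 ⟨0, by omega⟩ ≠ astar}) Hstar2)
    (πM : MPolicy S A) :
    (Hstar - Hstar2) * (1 - πM.p t (lastState h) astar)
      ≤ Hstar - expEntFrom M πM.toPolicy (T - 1 - t) h := by
  have hbound : expEntFrom M πM.toPolicy (T - 1 - t) h
      ≤ πM.p t (lastState h) astar * Hstar + (1 - πM.p t (lastState h) astar) * Hstar2 :=
    expEntFrom_le_of_firstAction M πM.toPolicy h (fun s a s' hs => by rw [hdet, if_neg hs])
      (by omega) (fun c hc => hHstar.2 ⟨c, hc, rfl⟩)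
      (fun c hc ha => hHstar2.2 ⟨c, ⟨hc, ha⟩, rfl⟩)
  linarith
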